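/- Let G be a finite simple graph with chromatic number χ(G), π a linear order on V(G), and P : V(G) → ℕ a prediction. The algorithm FirstFitPredictions colors, for each value i in the range of P, the induced subgraph G_i = G[{v : P(v) = i}] greedily in π-order using a color palette disjoint from all other palettes. Let x(G) be the total number of distinct colors it uses and let η(G) = min over proper colorings O of G using colors from ℕ of |{v : P(v) ≠ O(v)}|. Then x(G) ≤ η(G) + χ(G). -/

import Mathlib

/-!
Fix an optimal coloring `O` realizing `η(G)`. Inside a prediction class `G_i`, the vertices
with `O v = i` form an independent set `I`. A greedy coloring uses at most one color that occurs
only on `I`: if colors `s < t` both did, a vertex of `I` colored `t` would have an earlier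
neighbor colored `s`, which would lie in `I` as well. All other colors are witnessed by
wrongly predicted vertices of `G_i`, so `G_i` costs at most its number of errors plus one,
and the extra one is only paid when `i` is a color of `O`.
-/

/-- `c` is the greedy (FirstFit) coloring of `G` under the linear order on the vertex type. -/
def IsGreedyColoring {V : Type*} [LinearOrder V] (G : SimpleGraph V) (c : V → ℕ) : Prop :=
  ∀ v : V, IsLeast {n : ℕ | ∀ u : V, G.Adj v u → u < v → c u ≠ n} (c v)

open Set

namespace IsGreedyColoring

variable {V : Type*} [LinearOrder V] {G : SimpleGraph V}

theorem exists_adj_lt_eq {c : V → ℕ} (hc : IsGreedyColoring G c) {v : V} {n : ℕ}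
    (hn : n < c v) : ∃ u, G.Adj v u ∧ u < v ∧ c u = n := by
  by_contra! h
  exact ((hc v).2 h).not_gt hn

theorem subsingleton_range_diff_image_compl {c : V → ℕ} (hc : IsGreedyColoring G c)
    {I : Set V} (hI : G.IsIndepSet I) : (range c \ c '' Iᶜ).Subsingleton := by
  have mem_of_notMem_image : ∀ w, c w ∉ c '' Iᶜ → w ∈ I := fun w hw =>
    by_contra fun hwI => hw ⟨w, hwI, rfl⟩
  have no_lt : ∀ s ∈ range c \ c '' Iᶜ, ∀ t ∈ range c \ c '' Iᶜ, ¬ s < t := by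
    rintro s ⟨-, hs⟩ t ⟨⟨v, rfl⟩, ht⟩ hst
    obtain ⟨u, hvu, -, rfl⟩ := hc.exists_adj_lt_eq hst
    exact hI (mem_of_notMem_image v ht) (mem_of_notMem_image u hs) hvu.ne hvu
  intro s hs t ht
  exact le_antisymm (le_of_not_gt (no_lt t ht s hs)) (le_of_not_gt (no_lt s hs t ht))

open Classical in
theorem ncard_range_le [Finite V] {c : V → ℕ} (hc : IsGreedyColoring G c) {I : Set V}
    (hI : G.IsIndepSet I) : (range c).ncard ≤ Iᶜ.ncard + if I.Nonempty then 1 else 0 := by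
  have hrest : (range c \ c '' Iᶜ).ncard ≤ if I.Nonempty then 1 else 0 := by
    split_ifs with hne
    · exact ncard_le_one_iff_subsingleton.2 (hc.subsingleton_range_diff_image_compl hI)
    · simp [not_nonempty_iff_eq_empty.1 hne]
  have himage : (c '' Iᶜ).ncard ≤ Iᶜ.ncard := ncard_image_le (toFinite _)
  have hsplit := ncard_le_ncard_sdiff_add_ncard (range c) (c '' Iᶜ)
  omega

open Classical in
theorem ncard_range_induce_le [Finite V] {s : Set V} {c : s → ℕ}
    (hc : IsGreedyColoring (G.induce s) c) {α : Type*} {O : V → α}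
    (hO : ∀ u v, G.Adj u v → O u ≠ O v) (a : α) :
    (range c).ncard ≤ {v ∈ s | O v ≠ a}.ncard + if a ∈ O '' s then 1 else 0 := by
  have hI : (G.induce s).IsIndepSet {v : s | O v = a} := fun u hu v hv _ huv =>
    hO u v huv (hu.trans hv.symm)
  convert hc.ncard_range_le hI using 2
  · rw [← ncard_image_of_injective _ Subtype.val_injective]
    congr 1
    ext v
    simp only [mem_image, mem_ofPred_eq, Subtype.exists, exists_and_right, exists_eq_right]
    grind
  · simp [Set.Nonempty]

end IsGreedyColoring

theorem Set.ncard_eq_sum_ncard_fiberwise {ι M : Type*} {f : ι → M} {s : Set ι}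
    (hs : s.Finite) {t : Finset M} (H : s.MapsTo f t) :
    s.ncard = ∑ b ∈ t, {a ∈ s | f a = b}.ncard := by
  classical
  obtain ⟨s, rfl⟩ := hs.exists_finset_coe
  rw [ncard_coe_finset, Finset.card_eq_sum_card_fiberwise H]
  exact Finset.sum_congr rfl fun b _ => by rw [← ncard_coe_finset, Finset.coe_filter]; rfl

theorem ffp_colors_le_error_add_chromatic_general {V : Type*} [Fintype V]
    [LinearOrder V] (G : SimpleGraph V) (P : V → ℕ)
    (c : (i : ℕ) → ({v : V | P v = i} → ℕ))
    (hc : ∀ i : ℕ, IsGreedyColoring (G.induce {v : V | P v = i}) (c i))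
    (k : ℕ)
    (η : ℕ)
    (hη : IsLeast {n : ℕ | ∃ O : V → ℕ, (∀ u v : V, G.Adj u v → O u ≠ O v) ∧
      (Set.range O).ncard = k ∧ n = {v : V | P v ≠ O v}.ncard} η) :
    (∑ i ∈ Finset.univ.image P, (Set.range (c i)).ncard) ≤ η + k := by
  classical
  obtain ⟨⟨O, hO, rfl, rfl⟩, -⟩ := hη
  have hclass (i : ℕ) : (range (c i)).ncard ≤
      {v ∈ {v | P v ≠ O v} | P v = i}.ncard + if i ∈ O '' {v | P v = i} then 1 else 0 := by
    refine ((hc i).ncard_range_induce_le hO i).trans_eq ?_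
    congr 3
    ext v
    simp only [mem_ofPred_eq]
    grind
  have hcorrect : ∑ i ∈ Finset.univ.image P, (if i ∈ O '' {v | P v = i} then 1 else 0) ≤
      (range O).ncard := by
    rw [← Finset.card_filter, ← ncard_coe_finset]
    refine ncard_le_ncard (fun i hi => ?_) (toFinite _)
    obtain ⟨-, v, -, rfl⟩ := Finset.mem_filter.1 hi
    exact mem_range_self v
  calc ∑ i ∈ Finset.univ.image P, (range (c i)).ncard
      ≤ ∑ i ∈ Finset.univ.image P, ({v ∈ {v | P v ≠ O v} | P v = i}.ncard +
          if i ∈ O '' {v | P v = i} then 1 else 0) := Finset.sum_le_sum fun i _ => hclass i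
    _ ≤ {v | P v ≠ O v}.ncard + (range O).ncard := by
      rw [Finset.sum_add_distrib, ← ncard_eq_sum_ncard_fiberwise (toFinite _)
        fun v _ => Finset.mem_image_of_mem P (Finset.mem_univ v)]
      exact Nat.add_le_add_left hcorrect _

/-- FirstFitPredictions: coloring each prediction class `G_i = G[{v : P v = i}]` greedily
with pairwise disjoint palettes uses at most `η(G) + χ(G)` colors in total, where `η(G)` is
the minimum number of wrongly predicted vertices over all optimal (χ(G)-color) proper
colorings of `G`. -/
theorem ffp_colors_le_error_add_chromatic {V : Type*} [Fintype V] [DecidableEq V]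
    [LinearOrder V] (G : SimpleGraph V) (P : V → ℕ)
    (c : (i : ℕ) → ({v : V | P v = i} → ℕ))
    (hc : ∀ i : ℕ, IsGreedyColoring (G.induce {v : V | P v = i}) (c i))
    (k : ℕ) (hk : G.chromaticNumber = k)
    (η : ℕ)
    (hη : IsLeast {n : ℕ | ∃ O : V → ℕ, (∀ u v : V, G.Adj u v → O u ≠ O v) ∧
      (Set.range O).ncard = k ∧ n = {v : V | P v ≠ O v}.ncard} η) :
    (∑ i ∈ Finset.univ.image P, (Set.range (c i)).ncard) ≤ η + k :=
  ffp_colors_le_error_add_chromatic_general G P c hc k η hη
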